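/- Let W₁ and W₂ be regularized wavelet sets and let Ω := {x ∈ [0,1) : h̃_{W₁}(x) = h̃_{W₂}(x)}. Then, up to μ-null sets, W₁ ∩ W₂ = (δ|_{W₁})^{-1}(ξ^{-1}(Ω)) = (δ|_{W₂})^{-1}(ξ^{-1}(Ω)). -/

import Mathlib

open MeasureTheory Set Real Filter
open scoped symmDiff Classical

noncomputable section

/-- The Littlewood–Paley set `E = [-2π,-π) ∪ [π,2π)`. -/
def E : Set ℝ := Ico (-(2*π)) (-π) ∪ Ico π (2*π)

/-- `tau x = x + 2jπ`, where `j` is the unique integer with `x + 2jπ ∈ E`. -/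
def tau (x : ℝ) : ℝ :=
  if x - 2*π*(⌊x/(2*π)⌋ : ℝ) < π then x - 2*π*(⌊x/(2*π)⌋ : ℝ) - 2*π
  else x - 2*π*(⌊x/(2*π)⌋ : ℝ)

/-- `delta x = 2^k x`, where (for `x ≠ 0`) `k` is the unique integer with `2^k x ∈ E`. -/
def delta (x : ℝ) : ℝ :=
  if 0 < x then (2:ℝ)^(⌈Real.logb 2 (π/x)⌉) * x
  else (2:ℝ)^(⌊Real.logb 2 (2*π/(-x))⌋) * x

/-- The map `ξ : E → [0,1)`. -/
def xiMap (x : ℝ) : ℝ := if x < 0 then x/(2*π) + 1 else x/(2*π)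

/-- The inverse `ξ⁻¹ : [0,1) → E`. -/
def xiInv (y : ℝ) : ℝ := if y < 1/2 then 2*π*(y-1) else 2*π*y

/-- The translates `{W + 2kπ}_{k ∈ ℤ}` form a partition of `ℝ`. -/
def TransPartition (W : Set ℝ) : Prop :=
  (⋃ k : ℤ, (fun x : ℝ => x + 2*π*(k:ℝ)) '' W) = univ ∧
  Pairwise fun k l : ℤ =>
    Disjoint ((fun x : ℝ => x + 2*π*(k:ℝ)) '' W) ((fun x : ℝ => x + 2*π*(l:ℝ)) '' W)

/-- The dilates `{2^k W}_{k ∈ ℤ}` form a partition of `ℝ \ {0}`. -/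
def DilPartition (W : Set ℝ) : Prop :=
  (⋃ k : ℤ, (fun x : ℝ => (2:ℝ)^k * x) '' W) = {(0:ℝ)}ᶜ ∧
  Pairwise fun k l : ℤ =>
    Disjoint ((fun x : ℝ => (2:ℝ)^k * x) '' W) ((fun x : ℝ => (2:ℝ)^l * x) '' W)

/-- A regularized wavelet set. -/
def IsRegularizedWaveletSet (W : Set ℝ) : Prop :=
  MeasurableSet W ∧ TransPartition W ∧ DilPartition W

/-- The wavelet induced isomorphism `h̃_W = ξ ∘ τ|_W ∘ (δ|_W)⁻¹ ∘ ξ⁻¹` of `[0,1)`. -/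
def hIso (W : Set ℝ) : ℝ → ℝ :=
  fun t => xiMap (tau (Function.invFunOn delta W (xiInv t)))

/-- The class of wavelet induced maps of `[0,1)` (Proposition 2.3 (i)-(ii)). -/
def IsWaveletInduced (h : ℝ → ℝ) : Prop :=
  Set.BijOn h (Ico (0:ℝ) 1) (Ico (0:ℝ) 1) ∧
  Measurable ((Ico (0:ℝ) 1).restrict h) ∧
  ∃ A B : ℤ → Set ℝ,
    (∀ k, MeasurableSet (A k)) ∧ (∀ k, MeasurableSet (B k)) ∧
    (⋃ k, A k) = Ico (1/2 : ℝ) 1 ∧ Pairwise (Function.onFun Disjoint A) ∧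
    (⋃ k, B k) = Ico (0:ℝ) (1/2) ∧ Pairwise (Function.onFun Disjoint B) ∧
    (∀ k, ∀ x ∈ A k, h x = Int.fract ((2:ℝ)^k * x)) ∧
    (∀ k, ∀ x ∈ B k, h x = Int.fract ((2:ℝ)^k * (x - 1)))

/-- The class `WI₁`. -/
def MemWI1 (f : ℝ → ℝ) : Prop :=
  ∃ A B : ℕ → Set ℝ,
    (∀ k, MeasurableSet (A k)) ∧ (∀ k, MeasurableSet (B k)) ∧
    (⋃ k, A k) = Ico (1/2 : ℝ) 1 ∧ Pairwise (Function.onFun Disjoint A) ∧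
    (⋃ k, B k) = Ico (0:ℝ) (1/2) ∧ Pairwise (Function.onFun Disjoint B) ∧
    (∀ k, ∀ x ∈ A k, f x = x / 2^(k+1)) ∧
    (∀ k, ∀ x ∈ B k, f x = (x - 1) / 2^(k+1) + 1)

/-- The class `WI₂`. -/
def MemWI2 (g : ℝ → ℝ) : Prop :=
  Measurable ((Ico (0:ℝ) 1).restrict g) ∧
  Set.MapsTo g (Ico (0:ℝ) 1) (Ico (0:ℝ) 1) ∧
  Set.InjOn g (Ico (0:ℝ) 1) ∧
  ∀ x ∈ Ico (0:ℝ) 1, ∃ k l : ℕ, g x = (x + l) / 2^k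

/-- The Schröder–Cantor–Bernstein map `u ⋄ v` for injections between arbitrary types. -/
def scb {α β : Type*} (u : α → β) (v : β → α) : α → β :=
  fun x =>
    if x ∈ ⋃ k : ℕ, (v ∘ u)^[k] '' (Set.range v)ᶜ then u x
    else if h2 : x ∈ Set.range v then Classical.choose h2
    else u x

/-- The Schröder–Cantor–Bernstein map `u ⋄ v` for maps of `[0,1)`. -/
def scbOn (u v : ℝ → ℝ) : ℝ → ℝ :=
  fun x =>
    if x ∈ ⋃ k : ℕ, (v ∘ u)^[k] '' (Ico (0:ℝ) 1 \ v '' (Ico (0:ℝ) 1)) then u x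
    else Function.invFunOn v (Ico (0:ℝ) 1) x

/-- The metric `d` on wavelet sets. -/
def dws (W₁ W₂ : Set ℝ) : ℝ :=
  Real.sqrt (volume (W₁ ∆ W₂)).toReal + Real.sqrt (∫ x in W₁ ∆ W₂, |x|⁻¹)

/-- The measure `ν` on `[0,1)` with density `(1-x)⁻¹` on `[0,1/2)` and `x⁻¹` on `[1/2,1)`. -/
def nuMeasure : Measure ℝ :=
  volume.withDensity (fun x =>
    ENNReal.ofReal (if x ∈ Ico (0:ℝ) (1/2) then (1-x)⁻¹
      else if x ∈ Ico (1/2:ℝ) 1 then x⁻¹ else 0))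

/-!
For `x ∈ W₁` let `x' ∈ W₂` be the point with `δ x' = δ x`. At `ξ (δ x)` the two wavelet induced
isomorphisms take the values `ξ (τ x)` and `ξ (τ x')`, so they agree exactly when `τ x = τ x'`.
Since `x' = 2ⁿ x` and `τ` moves points by multiples of `2π`, this forces `x' = x`, i.e. `x ∈ W₂`,
unless `2ⁿ x ∈ x + 2πℤ` for some `n ≠ 0`; that happens only on a countable set. The second
identity is the first one with `W₁` and `W₂` exchanged.
-/

lemma exists_delta_eq_zpow_mul (x : ℝ) : ∃ k : ℤ, delta x = (2:ℝ) ^ k * x := by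
  unfold delta; split_ifs <;> exact ⟨_, rfl⟩

lemma delta_mem_E {x : ℝ} (hx : x ≠ 0) : delta x ∈ E := by
  rcases hx.lt_or_gt with hneg | hpos
  · have hr : 0 < 2 * π / -x := div_pos two_pi_pos (neg_pos.2 hneg)
    have hk : ⌊logb 2 (2 * π / -x)⌋ = Int.log 2 (2 * π / -x) := by
      exact_mod_cast floor_logb_natCast (b := 2) hr.le
    have hle := Int.zpow_log_le_self (b := 2) one_lt_two hr
    have hlt := Int.lt_zpow_succ_log_self (b := 2) one_lt_two (2 * π / -x)
    push_cast at hle hlt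
    rw [zpow_add_one₀ two_ne_zero] at hlt
    rw [le_div_iff₀ (neg_pos.2 hneg)] at hle
    rw [div_lt_iff₀ (neg_pos.2 hneg)] at hlt
    rw [delta, if_neg hneg.not_gt, hk]
    left
    constructor <;> nlinarith
  · have hr : 0 < π / x := by have := pi_pos; positivity
    have hk : ⌈logb 2 (π / x)⌉ = Int.clog 2 (π / x) := by
      exact_mod_cast ceil_logb_natCast (b := 2) hr.le
    have hge := Int.self_le_zpow_clog (b := 2) one_lt_two (π / x)
    have hlt := Int.zpow_pred_clog_lt_self (b := 2) one_lt_two hr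
    push_cast at hge hlt
    rw [zpow_sub_one₀ two_ne_zero] at hlt
    rw [div_le_iff₀ hpos] at hge
    rw [lt_div_iff₀ hpos] at hlt
    rw [delta, if_pos hpos, hk]
    right
    constructor <;> nlinarith

lemma eq_zero_of_zpow_mul_mem_E {e : ℝ} (he : e ∈ E) {j : ℤ} (hj : (2:ℝ) ^ j * e ∈ E) :
    j = 0 := by
  have h2j : (0:ℝ) < 2 ^ j := by positivity
  suffices h : (2:ℝ) ^ (-1 : ℤ) < 2 ^ j ∧ (2:ℝ) ^ j < 2 ^ (1 : ℤ) by
    simp only [zpow_lt_zpow_iff_right₀ (one_lt_two : (1:ℝ) < 2)] at h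
    omega
  rw [zpow_neg_one, zpow_one]
  rcases he with ⟨he₁, he₂⟩ | ⟨he₁, he₂⟩ <;> rcases hj with ⟨hj₁, hj₂⟩ | ⟨hj₁, hj₂⟩ <;>
    exact ⟨by nlinarith, by nlinarith⟩

lemma tau_mem_E (x : ℝ) : tau x ∈ E := by
  have hr : x - 2 * π * (⌊x / (2 * π)⌋ : ℝ) = 2 * π * Int.fract (x / (2 * π)) := by
    rw [Int.fract]; field_simp
  have h₀ := Int.fract_nonneg (x / (2 * π))
  have h₁ := Int.fract_lt_one (x / (2 * π))
  have := pi_pos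
  unfold tau
  rw [hr]
  split_ifs
  · left; constructor <;> nlinarith
  · right; constructor <;> nlinarith

lemma exists_tau_eq_add (x : ℝ) : ∃ j : ℤ, tau x = x + 2 * π * j := by
  unfold tau
  split_ifs
  · exact ⟨-⌊x / (2 * π)⌋ - 1, by push_cast; ring⟩
  · exact ⟨-⌊x / (2 * π)⌋, by push_cast; ring⟩

lemma mapsTo_xiMap : MapsTo xiMap E (Ico 0 1) := by
  intro e he
  have hq : e / (2 * π) * (2 * π) = e := div_mul_cancel₀ _ two_pi_pos.ne'
  have := pi_pos
  rcases he with ⟨he₁, he₂⟩ | ⟨he₁, he₂⟩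
  · rw [xiMap, if_pos (by linarith)]
    constructor <;> nlinarith
  · rw [xiMap, if_neg (by linarith)]
    constructor <;> nlinarith

lemma leftInvOn_xiInv_xiMap : LeftInvOn xiInv xiMap E := by
  intro e he
  have hq : e / (2 * π) * (2 * π) = e := div_mul_cancel₀ _ two_pi_pos.ne'
  have := pi_pos
  rcases he with ⟨he₁, he₂⟩ | ⟨he₁, he₂⟩
  · rw [xiMap, if_pos (by linarith), xiInv, if_pos (by nlinarith)]
    field_simp; ring
  · rw [xiMap, if_neg (by linarith), xiInv, if_neg (by nlinarith)]
    field_simp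

lemma leftInvOn_xiMap_xiInv : LeftInvOn xiMap xiInv (Ico 0 1) := by
  have := pi_pos
  rintro t ⟨ht₀, ht₁⟩
  unfold xiInv
  split_ifs
  · rw [xiMap, if_pos (by nlinarith)]; field_simp; ring
  · rw [xiMap, if_neg (by nlinarith)]; field_simp

lemma mem_xiInv_image_iff {S : Set ℝ} (hS : S ⊆ Ico 0 1) {e : ℝ} (he : e ∈ E) :
    e ∈ xiInv '' S ↔ xiMap e ∈ S := by
  constructor
  · rintro ⟨t, ht, rfl⟩
    rwa [leftInvOn_xiMap_xiInv (hS ht)]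
  · exact fun h => ⟨_, h, leftInvOn_xiInv_xiMap he⟩

lemma hIso_xiMap (W : Set ℝ) {e : ℝ} (he : e ∈ E) :
    hIso W (xiMap e) = xiMap (tau (Function.invFunOn delta W e)) := by
  rw [hIso, leftInvOn_xiInv_xiMap he]

def dyadicDilateTranslateSet (c : ℝ) : Set ℝ :=
  {x | ∃ n m : ℤ, n ≠ 0 ∧ (2:ℝ) ^ n * x = x + c * m}

lemma countable_dyadicDilateTranslateSet (c : ℝ) : (dyadicDilateTranslateSet c).Countable := by
  refine (countable_range fun p : ℤ × ℤ => c * p.2 / ((2:ℝ) ^ p.1 - 1)).mono ?_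
  rintro x ⟨n, m, hn, hx⟩
  have h : (2:ℝ) ^ n - 1 ≠ 0 := by
    rw [sub_ne_zero, Ne, zpow_eq_one_iff_right₀ (zero_le_two : (0:ℝ) ≤ 2) (by norm_num)]
    exact hn
  exact ⟨(n, m), by rw [div_eq_iff h]; linear_combination -hx⟩

lemma eq_of_delta_eq_of_tau_eq {x y : ℝ}
    (hx : x ∉ dyadicDilateTranslateSet (2 * π))
    (hδ : delta y = delta x) (hτ : tau y = tau x) : y = x := by
  obtain ⟨k, hk⟩ := exists_delta_eq_zpow_mul x
  obtain ⟨l, hl⟩ := exists_delta_eq_zpow_mul y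
  obtain ⟨i, hi⟩ := exists_tau_eq_add x
  obtain ⟨j, hj⟩ := exists_tau_eq_add y
  have hy : y = (2:ℝ) ^ (k - l) * x := by
    rw [zpow_sub₀ two_ne_zero, div_mul_eq_mul_div, ← hk, ← hδ, hl,
      mul_div_cancel_left₀ _ (by positivity)]
  obtain hkl | hkl := eq_or_ne (k - l) 0
  · rw [hy, hkl, zpow_zero, one_mul]
  · refine (hx ⟨k - l, i - j, hkl, ?_⟩).elim
    rw [← hy]; push_cast; linarith

namespace DilPartition

variable {W W₁ W₂ : Set ℝ}

lemma zero_notMem (hW : DilPartition W) : (0:ℝ) ∉ W := by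
  intro h0
  have : (0:ℝ) ∈ ⋃ k : ℤ, (fun x : ℝ => (2:ℝ) ^ k * x) '' W :=
    mem_iUnion.2 ⟨0, 0, h0, by norm_num⟩
  rw [hW.1] at this
  exact this rfl

lemma injOn_delta (hW : DilPartition W) : InjOn delta W := by
  intro a ha b hb hab
  obtain ⟨j, hj⟩ := exists_delta_eq_zpow_mul a
  obtain ⟨k, hk⟩ := exists_delta_eq_zpow_mul b
  rw [hj, hk] at hab
  obtain rfl | hjk := eq_or_ne j k
  · exact mul_left_cancel₀ (by positivity) hab
  · exact (disjoint_left.1 (hW.2 hjk) ⟨a, ha, rfl⟩ ⟨b, hb, hab.symm⟩).elim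

lemma surjOn_delta (hW : DilPartition W) : SurjOn delta W E := by
  intro e he
  have he0 : e ≠ 0 := by
    have := pi_pos
    rintro rfl
    rcases he with ⟨-, h⟩ | ⟨h, -⟩ <;> linarith
  obtain ⟨k, w, hw, rfl⟩ : ∃ k : ℤ, ∃ w ∈ W, (2:ℝ) ^ k * w = e := by
    have : e ∈ ⋃ k : ℤ, (fun x : ℝ => (2:ℝ) ^ k * x) '' W := hW.1 ▸ he0
    simpa using this
  obtain ⟨j, hj⟩ := exists_delta_eq_zpow_mul w
  have hjk : delta w = (2:ℝ) ^ (j - k) * ((2:ℝ) ^ k * w) := by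
    rw [hj, ← mul_assoc, ← zpow_add₀ two_ne_zero, sub_add_cancel]
  have hw0 : w ≠ 0 := by rintro rfl; simp at he0
  have := eq_zero_of_zpow_mul_mem_E he (hjk ▸ delta_mem_E hw0)
  exact ⟨w, hw, by rw [hjk, this, zpow_zero, one_mul]⟩

lemma hIso_xiMap_delta (hW : DilPartition W) {x : ℝ} (hx : x ∈ W) :
    hIso W (xiMap (delta x)) = xiMap (tau x) := by
  rw [hIso_xiMap W (delta_mem_E (ne_of_mem_of_not_mem hx hW.zero_notMem)),
    hW.injOn_delta.leftInvOn_invFunOn hx]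

lemma mem_iff_delta_mem_xiInv_image (h₁ : DilPartition W₁) (h₂ : DilPartition W₂) {x : ℝ}
    (hx : x ∈ W₁) (hxS : x ∉ dyadicDilateTranslateSet (2 * π)) :
    x ∈ W₂ ↔ delta x ∈ xiInv '' {t ∈ Ico 0 1 | hIso W₁ t = hIso W₂ t} := by
  have he := delta_mem_E (ne_of_mem_of_not_mem hx h₁.zero_notMem)
  rw [mem_xiInv_image_iff (sep_subset _ _) he, mem_sep_iff, and_iff_right (mapsTo_xiMap he),
    h₁.hIso_xiMap_delta hx, hIso_xiMap W₂ he]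
  obtain ⟨hx'W, hx'δ⟩ : Function.invFunOn delta W₂ (delta x) ∈ W₂ ∧
      delta (Function.invFunOn delta W₂ (delta x)) = delta x :=
    ⟨Function.invFunOn_mem (h₂.surjOn_delta he), Function.invFunOn_eq (h₂.surjOn_delta he)⟩
  constructor
  · intro hx₂
    rw [h₂.injOn_delta hx'W hx₂ hx'δ]
  · intro h
    have hτ := leftInvOn_xiInv_xiMap.injOn (tau_mem_E _) (tau_mem_E _) h
    rwa [← eq_of_delta_eq_of_tau_eq hxS hx'δ hτ.symm]

lemma inter_symmDiff_subset (h₁ : DilPartition W₁) (h₂ : DilPartition W₂) :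
    (W₁ ∩ W₂) ∆ (W₁ ∩ delta ⁻¹' (xiInv '' {t ∈ Ico 0 1 | hIso W₁ t = hIso W₂ t})) ⊆
      dyadicDilateTranslateSet (2 * π) := by
  rw [← inter_symmDiff_distrib_left]
  rintro x ⟨hx, hsd⟩
  by_contra hxS
  rw [mem_symmDiff, mem_preimage, ← mem_iff_delta_mem_xiInv_image h₁ h₂ hx hxS] at hsd
  tauto

end DilPartition

/-- For regularized wavelet sets `W₁, W₂` and
`Ω = {x ∈ [0,1) : h̃_{W₁}(x) = h̃_{W₂}(x)}`, up to null sets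
`W₁ ∩ W₂ = (δ|_{W₁})⁻¹(ξ⁻¹(Ω)) = (δ|_{W₂})⁻¹(ξ⁻¹(Ω))`. -/
theorem inter_eq_deltaInv_xiInv_hIso_agreement (W₁ W₂ : Set ℝ)
    (h₁ : IsRegularizedWaveletSet W₁) (h₂ : IsRegularizedWaveletSet W₂) :
    volume ((W₁ ∩ W₂) ∆
      (W₁ ∩ delta ⁻¹' (xiInv '' {x ∈ Ico (0:ℝ) 1 | hIso W₁ x = hIso W₂ x}))) = 0 ∧
    volume ((W₁ ∩ W₂) ∆
      (W₂ ∩ delta ⁻¹' (xiInv '' {x ∈ Ico (0:ℝ) 1 | hIso W₁ x = hIso W₂ x}))) = 0 := by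
  have hS := (countable_dyadicDilateTranslateSet (2 * π)).measure_zero volume
  refine ⟨measure_mono_null (h₁.2.2.inter_symmDiff_subset h₂.2.2) hS, ?_⟩
  have hΩ : {x ∈ Ico (0:ℝ) 1 | hIso W₁ x = hIso W₂ x} =
      {x ∈ Ico (0:ℝ) 1 | hIso W₂ x = hIso W₁ x} :=
    ext fun _ => and_congr_right' eq_comm
  rw [inter_comm W₁ W₂, hΩ]
  exact measure_mono_null (h₂.2.2.inter_symmDiff_subset h₁.2.2) hS

end
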